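/- Let f : ℝ → ℝ be continuous and let ε > 0, and let [a,b] be a compact interval. Then there exist M ∈ ℕ, real numbers w₁,...,w_M, β₁,...,β_M, γ₁,...,γ_M, and a bias β₀ such that sup_{x ∈ [a,b]} |f(x) − (β₀ + Σ_{m=1}^{M} w_m·σ(β_m·x + γ_m))| < ε, where σ denotes the ReLU function σ(z) = max(z, 0). -/

import Mathlib

/-!
On a fine uniform grid, the piecewise-linear interpolant of `f` is a sum of ramps, and each ramp
`x ↦ (max (x - p) 0 - max (x - q) 0) / (q - p)` is a difference of two ReLU neurons, so the
interpolant is a one-hidden-layer ReLU network. On each cell of the grid the interpolant is a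
convex combination of the values of `f` at the two endpoints, so it stays within `ε` of `f` as
soon as the oscillation of `f` on every cell is below `ε`; uniform continuity on `[a, b]`
provides such a grid.
-/

open Finset

noncomputable section

def reluNet (M : ℕ) (w β γ : ℕ → ℝ) (β₀ : ℝ) (x : ℝ) : ℝ :=
  β₀ + ∑ m ∈ range M, w m * max (β m * x + γ m) 0

def seqAppend (M : ℕ) (u v : ℕ → ℝ) (m : ℕ) : ℝ :=
  if m < M then u m else v (m - M)

theorem reluNet_add (M M' : ℕ) (w β γ w' β' γ' : ℕ → ℝ) (c c' : ℝ) :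
    reluNet M w β γ c + reluNet M' w' β' γ' c' =
      reluNet (M + M') (seqAppend M w w') (seqAppend M β β') (seqAppend M γ γ') (c + c') := by
  funext x
  have hlow : ∀ m ∈ range M,
      seqAppend M w w' m * max (seqAppend M β β' m * x + seqAppend M γ γ' m) 0 =
        w m * max (β m * x + γ m) 0 := fun m hm => by
    simp only [seqAppend, if_pos (mem_range.mp hm)]
  have hhigh : ∀ m ∈ range M',
      seqAppend M w w' (M + m) * max (seqAppend M β β' (M + m) * x + seqAppend M γ γ' (M + m)) 0 =
        w' m * max (β' m * x + γ' m) 0 := fun m _ => by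
    simp [seqAppend]
  simp only [Pi.add_apply, reluNet]
  rw [sum_range_add, sum_congr rfl hlow, sum_congr rfl hhigh]
  ring

theorem reluNet_smul (c : ℝ) (M : ℕ) (w β γ : ℕ → ℝ) (β₀ : ℝ) :
    c • reluNet M w β γ β₀ = reluNet M (c • w) β γ (c * β₀) := by
  funext x
  simp [reluNet, mul_add, mul_sum, mul_assoc]

def reluNets : Submodule ℝ (ℝ → ℝ) where
  carrier := {g | ∃ (M : ℕ) (w β γ : ℕ → ℝ) (β₀ : ℝ), g = reluNet M w β γ β₀}
  zero_mem' := ⟨0, 0, 0, 0, 0, by funext x; simp [reluNet]⟩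
  add_mem' := by
    rintro _ _ ⟨M, w, β, γ, c, rfl⟩ ⟨M', w', β', γ', c', rfl⟩
    exact ⟨_, _, _, _, _, reluNet_add M M' w β γ w' β' γ' c c'⟩
  smul_mem' := by
    rintro c _ ⟨M, w, β, γ, β₀, rfl⟩
    exact ⟨_, _, _, _, _, reluNet_smul c M w β γ β₀⟩

theorem const_mem_reluNets (c : ℝ) : (fun _ => c) ∈ reluNets :=
  ⟨0, 0, 0, 0, c, by funext x; simp [reluNet]⟩

theorem relu_affine_mem_reluNets (β γ : ℝ) : (fun x => max (β * x + γ) 0) ∈ reluNets :=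
  ⟨1, 1, fun _ => β, fun _ => γ, 0, by funext x; simp [reluNet]⟩

def ramp (p q x : ℝ) : ℝ :=
  (max (x - p) 0 - max (x - q) 0) / (q - p)

theorem ramp_mem_reluNets (p q : ℝ) : ramp p q ∈ reluNets := by
  have h : ramp p q =
      (q - p)⁻¹ • ((fun x => max (1 * x + -p) 0) - fun x => max (1 * x + -q) 0) := by
    funext x
    simp [ramp, div_eq_inv_mul, sub_eq_add_neg]
  rw [h]
  exact reluNets.smul_mem _ (sub_mem (relu_affine_mem_reluNets _ _) (relu_affine_mem_reluNets _ _))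

section Ramp

variable {p q x : ℝ}

theorem ramp_of_le_left (hpq : p ≤ q) (hx : x ≤ p) : ramp p q x = 0 := by
  simp [ramp, max_eq_right (sub_nonpos.mpr hx), max_eq_right (sub_nonpos.mpr (hx.trans hpq))]

theorem ramp_of_right_le (hpq : p < q) (hx : q ≤ x) : ramp p q x = 1 := by
  rw [ramp, max_eq_left (sub_nonneg.mpr (hpq.le.trans hx)), max_eq_left (sub_nonneg.mpr hx),
    sub_sub_sub_cancel_left, div_self (sub_pos.mpr hpq).ne']

theorem ramp_mem_Icc (hpq : p < q) : ramp p q x ∈ Set.Icc (0 : ℝ) 1 := by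
  have hqp : 0 < q - p := sub_pos.mpr hpq
  rw [ramp, Set.mem_Icc, div_le_one hqp]
  constructor
  · exact div_nonneg (sub_nonneg.mpr (max_le_max_right 0 (by linarith))) hqp.le
  · calc max (x - p) 0 - max (x - q) 0 ≤ max (x - p - (x - q)) (0 - 0) := max_sub_max_le_max ..
      _ = q - p := by rw [sub_sub_sub_cancel_left, sub_zero, max_eq_left hqp.le]

end Ramp

theorem exists_mem_Icc_succ {α : Type*} [LinearOrder α] (t : ℕ → α) {n : ℕ} (hn : 0 < n) {x : α}
    (hx : x ∈ Set.Icc (t 0) (t n)) : ∃ i < n, x ∈ Set.Icc (t i) (t (i + 1)) := by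
  induction n, hn using Nat.le_induction with
  | base => exact ⟨0, zero_lt_one, hx⟩
  | succ n hn ih =>
    rcases le_or_gt (t n) x with h | h
    · exact ⟨n, n.lt_succ_self, h, hx.2⟩
    · obtain ⟨i, hi, hxi⟩ := ih ⟨hx.1, h.le⟩
      exact ⟨i, hi.trans n.lt_succ_self, hxi⟩

def pwLinearInterp (f : ℝ → ℝ) (t : ℕ → ℝ) (n : ℕ) (x : ℝ) : ℝ :=
  f (t 0) + ∑ j ∈ range n, ramp (t j) (t (j + 1)) x * (f (t (j + 1)) - f (t j))

theorem pwLinearInterp_mem_reluNets (f : ℝ → ℝ) (t : ℕ → ℝ) (n : ℕ) :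
    pwLinearInterp f t n ∈ reluNets := by
  have h : pwLinearInterp f t n = (fun _ => f (t 0)) +
      ∑ j ∈ range n, (f (t (j + 1)) - f (t j)) • ramp (t j) (t (j + 1)) := by
    funext x
    simp [pwLinearInterp, Finset.sum_apply, mul_comm]
  rw [h]
  exact add_mem (const_mem_reluNets _)
    (sum_mem fun j _ => reluNets.smul_mem _ (ramp_mem_reluNets _ _))

section Interp

variable {f : ℝ → ℝ} {t : ℕ → ℝ} {n : ℕ} {x : ℝ}

theorem pwLinearInterp_succ :
    pwLinearInterp f t (n + 1) x =
      pwLinearInterp f t n x + ramp (t n) (t (n + 1)) x * (f (t (n + 1)) - f (t n)) := by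
  simp only [pwLinearInterp, sum_range_succ, add_assoc]

theorem pwLinearInterp_of_le (ht : StrictMono t) (hx : t n ≤ x) :
    pwLinearInterp f t n x = f (t n) := by
  induction n with
  | zero => simp [pwLinearInterp]
  | succ n ih =>
    rw [pwLinearInterp_succ, ih ((ht.monotone n.le_succ).trans hx),
      ramp_of_right_le (ht n.lt_succ_self) hx]
    ring

theorem pwLinearInterp_of_mem_Icc (ht : StrictMono t) {i : ℕ} (hi : i < n)
    (hx : x ∈ Set.Icc (t i) (t (i + 1))) :
    pwLinearInterp f t n x = f (t i) + ramp (t i) (t (i + 1)) x * (f (t (i + 1)) - f (t i)) := by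
  induction n, hi using Nat.le_induction with
  | base => rw [pwLinearInterp_succ, pwLinearInterp_of_le ht hx.1]
  | succ n hn ih =>
    rw [pwLinearInterp_succ, ih,
      ramp_of_le_left (ht n.lt_succ_self).le (hx.2.trans (ht.monotone hn)), zero_mul, add_zero]

theorem dist_pwLinearInterp_lt (ht : StrictMono t) (hn : 0 < n) {ε : ℝ}
    (hosc : ∀ i < n, ∀ y ∈ Set.Icc (t i) (t (i + 1)), ∀ z ∈ Set.Icc (t i) (t (i + 1)),
      dist (f y) (f z) < ε)
    (hx : x ∈ Set.Icc (t 0) (t n)) : dist (f x) (pwLinearInterp f t n x) < ε := by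
  obtain ⟨i, hi, hxi⟩ := exists_mem_Icc_succ t hn hx
  have hleft : f (t i) ∈ Metric.ball (f x) ε :=
    hosc i hi _ ⟨le_rfl, (ht i.lt_succ_self).le⟩ x hxi
  have hright : f (t (i + 1)) ∈ Metric.ball (f x) ε :=
    hosc i hi _ ⟨(ht i.lt_succ_self).le, le_rfl⟩ x hxi
  have := (convex_ball (f x) ε).add_smul_sub_mem hleft hright
    (ramp_mem_Icc (x := x) (ht i.lt_succ_self))
  rwa [smul_eq_mul, ← pwLinearInterp_of_mem_Icc ht hi hxi, Metric.mem_ball, dist_comm] at this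

end Interp

theorem exists_uniform_grid {a b δ : ℝ} (hab : a < b) (hδ : 0 < δ) :
    ∃ n > 0, ∃ t : ℕ → ℝ, StrictMono t ∧ t 0 = a ∧ t n = b ∧ ∀ i, t (i + 1) - t i < δ := by
  obtain ⟨n, hn⟩ := exists_nat_gt ((b - a) / δ)
  have hn0 : (0 : ℝ) < n := (div_pos (sub_pos.mpr hab) hδ).trans hn
  have hh : 0 < (b - a) / n := div_pos (sub_pos.mpr hab) hn0
  refine ⟨n, Nat.cast_pos.mp hn0, fun j => a + j * ((b - a) / n), ?_, by simp, ?_, fun i => ?_⟩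
  · exact fun i j hij => by simpa using mul_lt_mul_of_pos_right (Nat.cast_lt.mpr hij) hh
  · field_simp; ring
  · rw [div_lt_iff₀ hδ] at hn
    push_cast
    rw [add_sub_add_left_eq_sub, ← sub_mul, add_sub_cancel_left, one_mul, div_lt_iff₀ hn0]
    linarith

end

/-- One-hidden-layer ReLU networks are universal approximators on a
compact interval: for continuous `f` and `ε > 0` there are `M`,
weights `w`, `β`, `γ` and a bias `β₀` with
`sup_{x ∈ [a,b]} |f x - (β₀ + Σ_m w_m · max (β_m x + γ_m) 0)| < ε`. -/
theorem relu_universal_approx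
    (f : ℝ → ℝ) (hf : Continuous f) (ε : ℝ) (hε : 0 < ε)
    (a b : ℝ) (hab : a ≤ b) :
    ∃ (M : ℕ) (w β γ : ℕ → ℝ) (β₀ : ℝ),
      ∀ x ∈ Set.Icc a b,
        |f x - (β₀ + ∑ m ∈ Finset.range M, w m * max (β m * x + γ m) 0)| < ε := by
  rcases hab.eq_or_lt with rfl | hab
  · exact ⟨0, 0, 0, 0, f a, fun x hx => by simp [le_antisymm hx.2 hx.1, hε]⟩
  obtain ⟨δ, hδ, hfδ⟩ := Metric.uniformContinuousOn_iff.mp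
    (isCompact_Icc.uniformContinuousOn_of_continuous hf.continuousOn) ε hε
  obtain ⟨n, hn, t, ht, ht0, htn, hstep⟩ := exists_uniform_grid hab hδ
  have hosc : ∀ i < n, ∀ y ∈ Set.Icc (t i) (t (i + 1)), ∀ z ∈ Set.Icc (t i) (t (i + 1)),
      dist (f y) (f z) < ε := fun i hi y hy z hz => by
    have hcell : Set.Icc (t i) (t (i + 1)) ⊆ Set.Icc a b := by
      rw [← ht0, ← htn]
      exact Set.Icc_subset_Icc (ht.monotone i.zero_le) (ht.monotone hi)
    exact hfδ y (hcell hy) z (hcell hz) ((Real.dist_le_of_mem_Icc hy hz).trans_lt (hstep i))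
  obtain ⟨M, w, β, γ, β₀, hnet⟩ := pwLinearInterp_mem_reluNets f t n
  refine ⟨M, w, β, γ, β₀, fun x hx => ?_⟩
  have := dist_pwLinearInterp_lt ht hn hosc (by rwa [ht0, htn])
  rwa [congrFun hnet x, Real.dist_eq] at this
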